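/- arXiv:2009.10693 — 4 statements merged into one kernel-verified Lean document; each statement's English description precedes it below -/
import Mathlib

section
/- Let N_G, N_R be positive integers, and let ζ_G, ζ_R be positive reals such that 1 − ζ_G and 1 − ζ_R are both strictly positive or both strictly negative. Then N_G(1 − ζ_G) + N_R(1 − ζ_R) ≠ 1 − ζ_G^{N_G}·ζ_R^{N_R}. -/
/-! By Bernoulli's inequality `ζ ^ N ≥ 1 + N (ζ - 1)`, so with `u = N_G (ζ_G - 1)` and
`v = N_R (ζ_R - 1)` the product `ζ_G ^ N_G ζ_R ^ N_R` dominates `(1 + u) (1 + v) = 1 + u + v + u v`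
whenever both factors are positive. The sign hypothesis makes `u v > 0`, so the product strictly
exceeds `1 + u + v`, i.e. the left-hand side strictly exceeds the right-hand side. -/

lemma one_add_add_lt_mul_of_one_add_le {α : Type*} [CommRing α] [LinearOrder α]
    [IsStrictOrderedRing α] {p q u v : α} (hp : 0 < p) (hq : 0 < q)
    (hu : 1 + u ≤ p) (hv : 1 + v ≤ q) (huv : 0 < u * v) : 1 + u + v < p * q := by
  rcases le_or_gt (1 + u + v) 0 with hneg | hpos
  · exact hneg.trans_lt (mul_pos hp hq)
  -- `u` and `v` have the same sign, so `1 + u + v > 0` forces both `1 + u` and `1 + v` positive.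
  have hu' : 0 < 1 + u := by
    rcases pos_and_pos_or_neg_and_neg_of_mul_pos huv with ⟨h, -⟩ | ⟨-, h⟩ <;> linarith
  have hv' : 0 < 1 + v := by
    rcases pos_and_pos_or_neg_and_neg_of_mul_pos huv with ⟨-, h⟩ | ⟨h, -⟩ <;> linarith
  calc 1 + u + v < (1 + u) * (1 + v) := by linear_combination huv
    _ ≤ p * q := mul_le_mul hu hv hv'.le hp.le

theorem stmt_4 (NG NR : ℕ) (hNG : 0 < NG) (hNR : 0 < NR)
    (ζG ζR : ℝ) (hζG : 0 < ζG) (hζR : 0 < ζR)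
    (hsign : (0 < 1 - ζG ∧ 0 < 1 - ζR) ∨ (1 - ζG < 0 ∧ 1 - ζR < 0)) :
    (NG : ℝ) * (1 - ζG) + (NR : ℝ) * (1 - ζR) ≠ 1 - ζG ^ NG * ζR ^ NR := by
  have hG : 1 + NG * (ζG - 1) ≤ ζG ^ NG := one_add_mul_sub_le_pow (by linarith) NG
  have hR : 1 + NR * (ζR - 1) ≤ ζR ^ NR := one_add_mul_sub_le_pow (by linarith) NR
  have hprod : 0 < (NG * (ζG - 1)) * (NR * (ζR - 1) : ℝ) := by
    have hNG' : (0 : ℝ) < NG := by exact_mod_cast hNG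
    have hNR' : (0 : ℝ) < NR := by exact_mod_cast hNR
    rw [mul_mul_mul_comm]
    refine mul_pos (mul_pos hNG' hNR') ?_
    rcases hsign with ⟨h1, h2⟩ | ⟨h1, h2⟩ <;> nlinarith
  have key := one_add_add_lt_mul_of_one_add_le (pow_pos hζG NG) (pow_pos hζR NR) hG hR hprod
  intro h
  linarith
end

section
/- Let N be even and r = 1, 0 ≤ σ < 1. Then the expression ρ(σ) = r(r−1)/[(r²−σ²)(1 − ((1−σ²)/(r²−σ²))^{N/2})], interpreted as its limit as r → 1, equals 1/N independently of σ. -/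
/-!
With `c = r² - σ²`, `a = 1 - σ²` and `N = 2m` the expression equals `r c^(m-1) (r - 1) / (c^m - a^m)`,
and `(c^m - a^m) / (r - 1)` is a difference quotient of `r ↦ (r² - σ²)^m` at `r = 1`. It tends to the
derivative `2m a^(m-1)`, so the expression tends to `a^(m-1) / (2m a^(m-1)) = 1/N`: the factor
`a^(m-1) ≠ 0` cancels, and with it every trace of `σ`.
-/

open Filter Topology

theorem div_mul_one_sub_div_pow {K : Type*} [Field K] (x c a : K) (hc : c ≠ 0) {m : ℕ}
    (hm : m ≠ 0) : x / (c * (1 - (a / c) ^ m)) = x * c ^ (m - 1) / (c ^ m - a ^ m) := by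
  obtain ⟨k, rfl⟩ := Nat.exists_eq_add_one_of_ne_zero hm
  rw [div_pow, Nat.add_sub_cancel, pow_succ]
  field_simp
  ring

theorem HasDerivAt.tendsto_mul_sub_div_sub {𝕜 : Type*} [NontriviallyNormedField 𝕜]
    {f g : 𝕜 → 𝕜} {f' x : 𝕜} (hf : HasDerivAt f f' x) (hf' : f' ≠ 0) (hg : ContinuousAt g x) :
    Tendsto (fun r => g r * (r - x) / (f r - f x)) (𝓝[≠] x) (𝓝 (g x / f')) := by
  have hslope := (hg.tendsto.mono_left nhdsWithin_le_nhds).div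
    (hasDerivAt_iff_tendsto_slope.mp hf) hf'
  refine hslope.congr fun r => ?_
  rw [Pi.div_apply, slope_def_field, div_div_eq_mul_div]

theorem stmt_8 (N : ℕ) (hN : 0 < N) (hNeven : Even N) (σ : ℝ) (hσ0 : 0 ≤ σ) (hσ1 : σ < 1) :
    Filter.Tendsto
      (fun r : ℝ => r * (r - 1) /
        ((r ^ 2 - σ ^ 2) * (1 - ((1 - σ ^ 2) / (r ^ 2 - σ ^ 2)) ^ (N / 2))))
      (nhdsWithin 1 {1}ᶜ) (nhds (1 / (N : ℝ))) := by
  obtain ⟨m, rfl⟩ := hNeven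
  have hm : m ≠ 0 := by omega
  have hhalf : (m + m) / 2 = m := by omega
  have ha : (1 : ℝ) - σ ^ 2 ≠ 0 := by nlinarith
  have hderiv : HasDerivAt (fun r : ℝ => (r ^ 2 - σ ^ 2) ^ m)
      (m * (1 - σ ^ 2) ^ (m - 1) * 2) 1 := by
    simpa using (((hasDerivAt_id' (1 : ℝ)).fun_pow 2).sub_const (σ ^ 2)).fun_pow m
  have hlim := hderiv.tendsto_mul_sub_div_sub (by positivity)
    (g := fun r => r * (r ^ 2 - σ ^ 2) ^ (m - 1)) (by fun_prop)
  have hc : ∀ᶠ r in 𝓝[≠] (1 : ℝ), r ^ 2 - σ ^ 2 ≠ 0 :=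
    eventually_nhdsWithin_of_eventually_nhds
      ((show ContinuousAt (fun r : ℝ => r ^ 2 - σ ^ 2) 1 by fun_prop).eventually_ne (by simpa))
  convert hlim.congr' (hc.mono fun r hr => ?_) using 2
  · push_cast
    field_simp
    ring
  · rw [hhalf, div_mul_one_sub_div_pow _ _ _ hr hm]
    simp only [one_pow]
    ring
end

section
/- Let a_G, a_R, b_G, b_R, k_G, k_R > 0 with a_G·a_R > b_G·b_R, and let ζ_G, ζ_R be defined as in the bithermal formula. Then for N_G, N_R ≥ 1, the quantity ρ_A = (1 − (N_G ζ_G + N_R ζ_R)/(N_G+N_R)) / (1 − ζ_G^{N_G} ζ_R^{N_R}) satisfies ρ_A > 1/(N_G+N_R). -/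
/-!
Both ratios `ζ_G`, `ζ_R` lie in `(0, 1)` exactly because `b_G b_R < a_G a_R`. For such `x, y`,
Bernoulli's inequality `1 - xⁿ ≤ n (1 - x)` and `(1 - xⁿ)(1 - yᵐ) > 0` give
`1 - xⁿ yᵐ < n (1 - x) + m (1 - y)`, which is the claim after clearing denominators.
-/

lemma one_sub_pow_mul_pow_lt {x y : ℝ} (hx0 : 0 ≤ x) (hx1 : x < 1) (hy0 : 0 ≤ y) (hy1 : y < 1)
    {n m : ℕ} (hn : 0 < n) (hm : 0 < m) :
    1 - x ^ n * y ^ m < n * (1 - x) + m * (1 - y) := by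
  have bernoulli_x := one_add_mul_sub_le_pow (by linarith : (-1 : ℝ) ≤ x) n
  have bernoulli_y := one_add_mul_sub_le_pow (by linarith : (-1 : ℝ) ≤ y) m
  have hxn : x ^ n < 1 := pow_lt_one₀ hx0 hx1 hn.ne'
  have hym : y ^ m < 1 := pow_lt_one₀ hy0 hy1 hm.ne'
  nlinarith [mul_pos (sub_pos.2 hxn) (sub_pos.2 hym)]

lemma one_div_add_lt_one_sub_average_div {x y : ℝ} (hx0 : 0 ≤ x) (hx1 : x < 1) (hy0 : 0 ≤ y)
    (hy1 : y < 1) {n m : ℕ} (hn : 0 < n) (hm : 0 < m) :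
    1 / ((n : ℝ) + m) < (1 - ((n : ℝ) * x + m * y) / ((n : ℝ) + m)) / (1 - x ^ n * y ^ m) := by
  have hN : (0 : ℝ) < n + m := by positivity
  have hden : 0 < 1 - x ^ n * y ^ m := by
    have := mul_lt_one_of_nonneg_of_lt_one_left (pow_nonneg hx0 n)
      (pow_lt_one₀ hx0 hx1 hn.ne') (pow_le_one₀ (n := m) hy0 hy1.le)
    linarith
  have hnum : (1 - ((n : ℝ) * x + m * y) / ((n : ℝ) + m)) * ((n : ℝ) + m)
      = n * (1 - x) + m * (1 - y) := by
    field_simp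
    ring
  rw [div_lt_div_iff₀ hN hden, one_mul, hnum]
  exact one_sub_pow_mul_pow_lt hx0 hx1 hy0 hy1 hn hm

lemma bithermal_ratio_pos {aG aR bG bR kG kR : ℝ} (haG : 0 < aG) (haR : 0 < aR) (hbG : 0 < bG)
    (hbR : 0 < bR) (hkG : 0 < kG) (hkR : 0 < kR) :
    0 < bR * (aR * kG + bG * kR) / (aR * (aG * kR + bR * kG)) := by
  positivity

lemma bithermal_ratio_lt_one {aG aR bG bR kG kR : ℝ} (haG : 0 < aG) (haR : 0 < aR)
    (hbR : 0 < bR) (hkG : 0 < kG) (hkR : 0 < kR) (hadv : bG * bR < aG * aR) :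
    bR * (aR * kG + bG * kR) / (aR * (aG * kR + bR * kG)) < 1 := by
  rw [div_lt_one (by positivity)]
  nlinarith [mul_lt_mul_of_pos_right hadv hkR]

theorem stmt_9 (aG aR bG bR kG kR : ℝ)
    (haG : 0 < aG) (haR : 0 < aR) (hbG : 0 < bG) (hbR : 0 < bR)
    (hkG : 0 < kG) (hkR : 0 < kR) (hadv : bG * bR < aG * aR)
    (NG NR : ℕ) (hNG : 1 ≤ NG) (hNR : 1 ≤ NR) :
    let ζG := bR * (aR * kG + bG * kR) / (aR * (aG * kR + bR * kG))
    let ζR := bG * (aG * kR + bR * kG) / (aG * (aR * kG + bG * kR))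
    (1 - ((NG : ℝ) * ζG + (NR : ℝ) * ζR) / ((NG : ℝ) + (NR : ℝ))) /
      (1 - ζG ^ NG * ζR ^ NR) > 1 / ((NG : ℝ) + (NR : ℝ)) := by
  intro ζG ζR
  have hadv' : bR * bG < aR * aG := by linarith [mul_comm bG bR, mul_comm aG aR]
  exact one_div_add_lt_one_sub_average_div
    (bithermal_ratio_pos haG haR hbG hbR hkG hkR).le
    (bithermal_ratio_lt_one haG haR hbR hkG hkR hadv)
    (bithermal_ratio_pos haR haG hbR hbG hkR hkG).le
    (bithermal_ratio_lt_one haR haG hbG hkR hkG hadv') hNG hNR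
end

section
/- Let a_G, a_R, b_G, b_R, k_G, k_R > 0 with a_G·a_R < b_G·b_R. Then with ζ_G, ζ_R as in the bithermal formula, ρ_A = (1 − (N_G ζ_G + N_R ζ_R)/(N_G+N_R)) / (1 − ζ_G^{N_G} ζ_R^{N_R}) < 1/(N_G+N_R) for all positive integers N_G, N_R. -/
/-! Both ratios `ζG` and `ζR` exceed `1` exactly because `aG * aR < bG * bR`. For `x, y > 1`,
multiplying the Bernoulli bounds `x ^ m ≥ 1 + m (x - 1)` and `y ^ n ≥ 1 + n (y - 1)` gives
`x ^ m * y ^ n - 1 > m (x - 1) + n (y - 1)`, the cross term `m n (x - 1) (y - 1)` being positive;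
this is the claimed inequality once both sides are multiplied by the negative number
`(m + n) (1 - x ^ m * y ^ n)`. -/

lemma one_lt_bithermal_ratio {aG aR bG bR kG kR : ℝ}
    (haG : 0 < aG) (haR : 0 < aR) (hbR : 0 < bR) (hkG : 0 < kG) (hkR : 0 < kR)
    (hdis : aG * aR < bG * bR) :
    1 < bR * (aR * kG + bG * kR) / (aR * (aG * kR + bR * kG)) := by
  rw [one_lt_div (by positivity)]
  nlinarith [mul_lt_mul_of_pos_right hdis hkR]

lemma add_mul_sub_one_lt_pow_mul_pow_sub_one {x y : ℝ} (hx : 1 < x) (hy : 1 < y)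
    {m n : ℕ} (hm : m ≠ 0) (hn : n ≠ 0) :
    m * (x - 1) + n * (y - 1) < x ^ m * y ^ n - 1 := by
  have bernoulli_x : 1 + m * (x - 1) ≤ x ^ m := by
    simpa using one_add_mul_le_pow (by linarith : (-2 : ℝ) ≤ x - 1) m
  have bernoulli_y : 1 + n * (y - 1) ≤ y ^ n := by
    simpa using one_add_mul_le_pow (by linarith : (-2 : ℝ) ≤ y - 1) n
  have cross : 0 < (m * (x - 1)) * (n * (y - 1)) := by
    have := sub_pos.2 hx
    have := sub_pos.2 hy
    positivity
  calc (m : ℝ) * (x - 1) + n * (y - 1)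
      < (1 + m * (x - 1)) * (1 + n * (y - 1)) - 1 := by linarith
    _ ≤ x ^ m * y ^ n - 1 := by gcongr

lemma bithermal_fixation_lt_neutral {x y : ℝ} (hx : 1 < x) (hy : 1 < y)
    {m n : ℕ} (hm : m ≠ 0) (hn : n ≠ 0) :
    (1 - ((m : ℝ) * x + n * y) / (m + n)) / (1 - x ^ m * y ^ n) < 1 / (m + n) := by
  have hN : (0 : ℝ) < m + n := by positivity
  have hkey := add_mul_sub_one_lt_pow_mul_pow_sub_one hx hy hm hn
  have hden : 1 - x ^ m * y ^ n < 0 := by nlinarith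
  rw [div_lt_iff_of_neg hden, one_sub_div hN.ne', one_div_mul_eq_div, div_lt_div_iff_of_pos_right hN]
  linarith

theorem stmt_10 (aG aR bG bR kG kR : ℝ)
    (haG : 0 < aG) (haR : 0 < aR) (hbG : 0 < bG) (hbR : 0 < bR)
    (hkG : 0 < kG) (hkR : 0 < kR) (hdis : aG * aR < bG * bR)
    (NG NR : ℕ) (hNG : 0 < NG) (hNR : 0 < NR) :
    let ζG := bR * (aR * kG + bG * kR) / (aR * (aG * kR + bR * kG))
    let ζR := bG * (aG * kR + bR * kG) / (aG * (aR * kG + bG * kR))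
    (1 - ((NG : ℝ) * ζG + (NR : ℝ) * ζR) / ((NG : ℝ) + (NR : ℝ))) /
      (1 - ζG ^ NG * ζR ^ NR) < 1 / ((NG : ℝ) + (NR : ℝ)) := by
  have hζG := one_lt_bithermal_ratio haG haR hbR hkG hkR hdis
  have hζR := one_lt_bithermal_ratio haR haG hbG hkR hkG (by rwa [mul_comm aR, mul_comm bR])
  exact bithermal_fixation_lt_neutral hζG hζR hNG.ne' hNR.ne'
end
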